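/- The finiteness problem for recognizable tree languages is decidable: given a deterministic bottom-up finite tree automaton M (with finite state set, finite ranked input alphabet, and all data given effectively), it is decidable whether L(M) is finite. Indeed, where p is the number of states of M, L(M) is finite if and only if every tree in L(M) has height less than p. -/
import Mathlib


/-- Trees over a ranked alphabet `σ`. -/
inductive RTree (σ : ℕ → Type) : Type
  | node {k : ℕ} (a : σ k) (ts : Fin k → RTree σ) : RTree σ

/-- The leaf tree for a rank-0 symbol. -/
def RTree.leaf {σ : ℕ → Type} (a : σ 0) : RTree σ := .node a Fin.elim0

/-- Deterministic bottom-up finite tree automaton (σ = ranked alphabet, Q = states). -/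
structure DBUA (σ : ℕ → Type) (Q : Type) where
  δ : ∀ k, σ k → (Fin k → Q) → Q
  F : Set Q

/-- The state reached after bottom-up processing of a tree. -/
def DBUA.run {σ : ℕ → Type} {Q : Type} (M : DBUA σ Q) : RTree σ → Q
  | .node a ts => M.δ _ a fun i => M.run (ts i)

/-- The tree language recognized by a deterministic bottom-up fta. -/
def DBUA.lang {σ : ℕ → Type} {Q : Type} (M : DBUA σ Q) : Set (RTree σ) :=
  {t | M.run t ∈ M.F}

/-- A tree language is recognizable if it is recognized by some deterministic
bottom-up finite tree automaton (with finitely many states). -/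
def Recognizable {σ : ℕ → Type} (L : Set (RTree σ)) : Prop :=
  ∃ (Q : Type) (_ : Fintype Q) (M : DBUA σ Q), L = M.lang

/-- The height of a tree: 0 for leaves, `1 + max` of the childrens' heights
otherwise. -/
def height {σ : ℕ → Type} : RTree σ → ℕ
  | .node _ ts => Finset.univ.sup fun i => height (ts i) + 1


section Aux

variable {σ : ℕ → Type} {Q : Type}

lemma height_child_lt {k : ℕ} (a : σ k) (ts : Fin k → RTree σ) (i : Fin k) :
    height (ts i) + 1 ≤ height (RTree.node a ts) := by
  simp only [height]
  exact Finset.le_sup (f := fun j => height (ts j) + 1) (Finset.mem_univ i)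

lemma run_node_update (M : DBUA σ Q) {k : ℕ} (a : σ k) (ts : Fin k → RTree σ)
    (i : Fin k) (v : RTree σ) (hv : M.run v = M.run (ts i)) :
    M.run (RTree.node a (Function.update ts i v)) = M.run (RTree.node a ts) := by
  classical
  show M.δ _ a _ = M.δ _ a _
  congr 1
  funext j
  by_cases h : j = i
  · subst h; simp [hv]
  · simp [Function.update_of_ne h]

lemma key [Fintype Q] (M : DBUA σ Q) :
    ∀ t : RTree σ, ∀ s : Finset Q, Fintype.card Q ≤ s.card + height t →
    (∃ t', M.run t' = M.run t ∧ height t < height t') ∨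
    (∃ q ∈ s, ∃ C : RTree σ → RTree σ, ∃ u : RTree σ,
      C u = t ∧ M.run u = q ∧ height u ≤ height t ∧
      (∀ v, M.run v = M.run u → M.run (C v) = M.run t) ∧
      (∀ v, height u < height v → height t < height (C v))) := by
  classical
  intro t
  induction t with
  | @node k a ts ih =>
    intro s hcard
    by_cases hmem : M.run (RTree.node a ts) ∈ s
    · right
      exact ⟨_, hmem, id, RTree.node a ts, rfl, rfl, le_rfl,
        fun v hv => hv, fun v hv => hv⟩
    · have hslt : s.card < Fintype.card Q := by
        rw [← Finset.card_univ]
        exact Finset.card_lt_card ⟨Finset.subset_univ s,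
          fun h => hmem (h (Finset.mem_univ _))⟩
      have hpos : 1 ≤ height (RTree.node a ts) := by omega
      have hne : (Finset.univ : Finset (Fin k)).Nonempty := by
        rcases (Finset.univ : Finset (Fin k)).eq_empty_or_nonempty with h | h
        · simp only [height, h, Finset.sup_empty] at hpos
          exact absurd hpos (by simp)
        · exact h
      obtain ⟨i, -, hi⟩ := Finset.exists_mem_eq_sup Finset.univ hne
        (fun i => height (ts i) + 1)
      have hi' : height (RTree.node a ts) = height (ts i) + 1 := by
        simp only [height]; exact hi
      have hcard' : Fintype.card Q ≤
          (insert (M.run (RTree.node a ts)) s).card + height (ts i) := by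
        rw [Finset.card_insert_of_notMem hmem]; omega
      rcases ih i (insert (M.run (RTree.node a ts)) s) hcard' with
        ⟨t'', ht''r, ht''h⟩ | ⟨q, hqmem, C, u, hCu, hru, hhu, hrun, hht⟩
      · left
        refine ⟨RTree.node a (Function.update ts i t''),
          run_node_update M a ts i t'' ht''r, ?_⟩
        have := height_child_lt a (Function.update ts i t'') i
        simp only [Function.update_self] at this
        omega
      · rcases Finset.mem_insert.mp hqmem with hq | hq
        · -- q = run (node a ts); pump by plugging the whole tree into C
          left
          refine ⟨RTree.node a (Function.update ts i (C (RTree.node a ts))), ?_, ?_⟩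
          · exact run_node_update M a ts i _ (hrun _ (by rw [hru, hq]))
          · have hCh : height (ts i) < height (C (RTree.node a ts)) :=
              hht _ (by omega)
            have := height_child_lt a (Function.update ts i (C (RTree.node a ts))) i
            simp only [Function.update_self] at this
            omega
        · -- q ∈ s; lift the context
          right
          refine ⟨q, hq, fun v => RTree.node a (Function.update ts i (C v)), u,
            ?_, hru, by omega, ?_, ?_⟩
          · show RTree.node a (Function.update ts i (C u)) = RTree.node a ts
            rw [hCu, Function.update_eq_self]
          · intro v hv
            exact run_node_update M a ts i (C v) (hrun v hv)
          · intro v hv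
            show height (RTree.node a ts) < height (RTree.node a (Function.update ts i (C v)))
            have hCh : height (ts i) < height (C v) := hht v hv
            have := height_child_lt a (Function.update ts i (C v)) i
            simp only [Function.update_self] at this
            omega

lemma pump [Fintype Q] (M : DBUA σ Q) (t : RTree σ)
    (h : Fintype.card Q ≤ height t) :
    ∃ t', M.run t' = M.run t ∧ height t < height t' := by
  rcases key M t ∅ (by simpa using h) with h1 | ⟨q, hq, _⟩
  · exact h1
  · simp at hq

lemma finite_height_lt [∀ k, Fintype (σ k)]
    (hσ : ∃ n, ∀ k, n ≤ k → IsEmpty (σ k)) (n : ℕ) :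
    {t : RTree σ | height t < n}.Finite := by
  obtain ⟨N, hN⟩ := hσ
  induction n with
  | zero => simp
  | succ n ihn =>
    have hsub : {t : RTree σ | height t < n + 1} ⊆
        ⋃ k ∈ Finset.range N, ⋃ a : σ k,
          (fun ts => RTree.node a ts) ''
            (Set.univ.pi fun _ : Fin k => {t | height t < n}) := by
      rintro ⟨a, ts⟩ ht
      rename_i k
      simp only [Set.mem_setOf_eq] at ht
      have hkN : k < N := by
        by_contra hk
        exact (hN k (by omega)).elim a
      simp only [Set.mem_iUnion, Finset.mem_range, Set.mem_image, Set.mem_pi,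
        Set.mem_univ, forall_true_left, Set.mem_setOf_eq]
      refine ⟨k, hkN, a, ts, fun i => ?_, rfl⟩
      have := height_child_lt a ts i
      omega
    refine Set.Finite.subset ?_ hsub
    refine Set.Finite.biUnion (Finset.finite_toSet _) fun k _ => ?_
    exact Set.finite_iUnion fun a => (Set.Finite.pi fun _ => ihn).image _

end Aux

/-- Theorem 3.75: the finiteness problem for recognizable tree languages is
decidable: for a deterministic bottom-up finite tree automaton `M` over a finite
ranked alphabet, with `p` its number of states, `L(M)` is finite iff every tree
of `L(M)` has height less than `p` (so finiteness reduces to an emptiness test). -/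
theorem finiteness_decidable {σ : ℕ → Type} [∀ k, Fintype (σ k)]
    (hσ : ∃ n, ∀ k, n ≤ k → IsEmpty (σ k))
    {Q : Type} [Fintype Q] (M : DBUA σ Q) :
    M.lang.Finite ↔ ∀ t ∈ M.lang, height t < Fintype.card Q := by
  constructor
  · intro hfin
    by_contra hbad
    push_neg at hbad
    obtain ⟨t0, ht0, hh0⟩ := hbad
    have step : ∀ x : {t : RTree σ // M.run t = M.run t0 ∧ Fintype.card Q ≤ height t},
        ∃ y : {t : RTree σ // M.run t = M.run t0 ∧ Fintype.card Q ≤ height t},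
          height x.1 < height y.1 := by
      rintro ⟨x, hx1, hx2⟩
      obtain ⟨t', ht'r, ht'h⟩ := pump M x hx2
      exact ⟨⟨t', by rw [ht'r, hx1], by omega⟩, ht'h⟩
    choose g hg using step
    set f : ℕ → {t : RTree σ // M.run t = M.run t0 ∧ Fintype.card Q ≤ height t} :=
      fun n => g^[n] ⟨t0, rfl, by omega⟩ with hf
    have hmono : StrictMono fun n => height (f n).1 := by
      apply strictMono_nat_of_lt_succ
      intro n
      have : f (n + 1) = g (f n) := Function.iterate_succ_apply' g n _
      rw [this]
      exact hg (f n)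
    have hinj : Function.Injective fun n => (f n).1 := by
      intro m n hmn
      by_contra hne
      rcases Nat.lt_or_ge m n with h | h
      · exact absurd (congrArg height hmn) (hmono h).ne
      · have h' : n < m := by omega
        exact absurd (congrArg height hmn) (hmono h').ne'
    have : M.lang.Infinite :=
      Set.infinite_of_injective_forall_mem hinj fun n => by
        show M.run (f n).1 ∈ M.F
        rw [(f n).2.1]; exact ht0
    exact this hfin
  · intro hb
    exact (finite_height_lt hσ (Fintype.card Q)).subset fun t ht => hb t ht
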